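/- arXiv:1810.06271 — 3 statements merged into one kernel-verified Lean document; each statement's English description precedes it below -/
import Mathlib

section
/- Let x ∈ ℝ^N, let W ∈ ℝ^{N×n} have orthonormal columns, and suppose the column span of W equals a subspace T with orthogonal projection Π_T. Write x_N for the last coordinate of x and suppose ‖x‖ = |x_N| (i.e., x = (0,…,0,x_N)). Let R = diag(1,…,1,√(1+x_N²)) ∈ ℝ^{N×N} and M = R⁻¹W. Then det(MᵀM) = (1 + ‖x‖² − ‖Π_T x‖²)/(1 + ‖x‖²). -/
open Matrix

/-- Let `x ∈ ℝ^{N+1}` be supported in its last coordinate (`x = (0,…,0,x_N)`),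
let `W` have orthonormal columns spanning a subspace `T` with orthogonal projection
`Π_T = W Wᵀ`, let `R = diag(1,…,1,√(1+x_N²))` and `M = R⁻¹ W`.  Then
`det(MᵀM) = (1 + ‖x‖² − ‖Π_T x‖²)/(1 + ‖x‖²)`. -/
theorem det_MTM_formula (N n : ℕ)
    (x : Fin (N + 1) → ℝ) (hx : ∀ i, i ≠ Fin.last N → x i = 0)
    (W : Matrix (Fin (N + 1)) (Fin n) ℝ) (hW : Wᵀ * W = 1) :
    let R : Matrix (Fin (N + 1)) (Fin (N + 1)) ℝ :=
      Matrix.diagonal fun i =>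
        if i = Fin.last N then Real.sqrt (1 + x (Fin.last N) ^ 2) else 1
    let M := R⁻¹ * W
    (Mᵀ * M).det
      = (1 + x ⬝ᵥ x - ((W * Wᵀ).mulVec x) ⬝ᵥ ((W * Wᵀ).mulVec x)) / (1 + x ⬝ᵥ x) := by
  intro R M
  set t := x (Fin.last N) with ht
  have ht0 : (0:ℝ) < 1 + t ^ 2 := by positivity
  have hsqrt0 : Real.sqrt (1 + t ^ 2) ≠ 0 := by positivity
  -- the inverse of R
  set g : Fin (N + 1) → ℝ := fun i =>
    if i = Fin.last N then (Real.sqrt (1 + t ^ 2))⁻¹ else 1 with hg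
  have hRinv : R⁻¹ = Matrix.diagonal g := by
    apply Matrix.inv_eq_right_inv
    show Matrix.diagonal _ * Matrix.diagonal g = 1
    rw [Matrix.diagonal_mul_diagonal]
    ext i j
    rcases eq_or_ne i j with rfl | hij
    · by_cases h : i = Fin.last N <;>
        simp [hg, h, Matrix.one_apply, ← ht, mul_inv_cancel₀ hsqrt0]
    · simp [Matrix.diagonal_apply_ne _ hij, Matrix.one_apply_ne hij]
  -- rank-one decomposition of g*g as a diagonal matrix
  set α : ℝ := (1 + t ^ 2)⁻¹ - 1 with hα
  set u : Fin (N + 1) → ℝ := Pi.single (Fin.last N) α with hu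
  set v : Fin (N + 1) → ℝ := Pi.single (Fin.last N) 1 with hv
  have hdiag : Matrix.diagonal (g * g) = 1 + replicateCol Unit u * replicateRow Unit v := by
    ext i j
    rcases eq_or_ne i j with rfl | hij
    · by_cases h : i = Fin.last N
      · subst h
        have h2 : g (Fin.last N) * g (Fin.last N) = (1 + t ^ 2)⁻¹ := by
          simp only [hg, if_pos rfl, ← mul_inv, Real.mul_self_sqrt ht0.le]
        simp [Matrix.mul_apply, h2, Matrix.one_apply, hu, hv, hα]
      · simp [hg, h, hu, hv, Matrix.mul_apply, Matrix.one_apply, Pi.single_apply]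
    · have huv : u i * v j = 0 := by
        rcases eq_or_ne i (Fin.last N) with rfl | hi
        · have hj : j ≠ Fin.last N := fun h => hij h.symm
          rw [hv, Pi.single_eq_of_ne hj]; ring
        · rw [hu, Pi.single_eq_of_ne hi]; ring
      simp [Matrix.diagonal_apply_ne _ hij, Matrix.one_apply_ne hij, Matrix.mul_apply,
        Matrix.replicateCol_apply, Matrix.replicateRow_apply, huv]
  -- compute MᵀM
  have hM : Mᵀ * M = 1 + replicateCol Unit (Wᵀ *ᵥ u) * replicateRow Unit (v ᵥ* W) := by
    show (R⁻¹ * W)ᵀ * (R⁻¹ * W) = _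
    rw [hRinv, Matrix.transpose_mul, Matrix.diagonal_transpose]
    calc Wᵀ * Matrix.diagonal g * (Matrix.diagonal g * W)
        = Wᵀ * (Matrix.diagonal g * Matrix.diagonal g) * W := by
          simp only [Matrix.mul_assoc]
      _ = Wᵀ * Matrix.diagonal (g * g) * W := by rw [Matrix.diagonal_mul_diagonal]; rfl
      _ = Wᵀ * (1 + replicateCol Unit u * replicateRow Unit v) * W := by rw [hdiag]
      _ = 1 + replicateCol Unit (Wᵀ *ᵥ u) * replicateRow Unit (v ᵥ* W) := by
          rw [Matrix.mul_add, Matrix.mul_one, Matrix.add_mul, hW,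
            Matrix.replicateCol_mulVec, Matrix.replicateRow_vecMul, Matrix.mul_assoc, Matrix.mul_assoc,
            Matrix.mul_assoc]
  -- abbreviate s
  set s : ℝ := ∑ j, W (Fin.last N) j * W (Fin.last N) j with hs
  -- the determinant
  have hdet : (Mᵀ * M).det = 1 + α * s := by
    rw [hM, Matrix.det_one_add_replicateCol_mul_replicateRow]
    congr 1
    rw [hv, hu, Matrix.single_one_vecMul, Matrix.mulVec_single]
    simp only [dotProduct, Matrix.transpose_apply]
    rw [hs, Finset.mul_sum]
    exact Finset.sum_congr rfl fun j _ => by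
      change W (Fin.last N) j * (W (Fin.last N) j * α) = _; ring
  have hsP : (W * Wᵀ) (Fin.last N) (Fin.last N) = s := by
    simp [Matrix.mul_apply, hs]
  -- compute x ⬝ᵥ x
  have hxx : x ⬝ᵥ x = t ^ 2 := by
    rw [dotProduct, Finset.sum_eq_single (Fin.last N)
      (fun b _ hb => by rw [hx b hb, mul_zero])
      (fun h => absurd (Finset.mem_univ _) h), ← ht]
    ring
  -- compute the projection norm
  have hproj : ((W * Wᵀ) *ᵥ x) ⬝ᵥ ((W * Wᵀ) *ᵥ x) = t ^ 2 * s := by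
    have hmv : ∀ i, ((W * Wᵀ) *ᵥ x) i = (W * Wᵀ) i (Fin.last N) * t := by
      intro i
      rw [Matrix.mulVec, dotProduct, Finset.sum_eq_single (Fin.last N)
        (fun b _ hb => by rw [hx b hb, mul_zero])
        (fun h => absurd (Finset.mem_univ _) h), ← ht]
    calc ((W * Wᵀ) *ᵥ x) ⬝ᵥ ((W * Wᵀ) *ᵥ x)
        = ∑ i, (W * Wᵀ) i (Fin.last N) * t * ((W * Wᵀ) i (Fin.last N) * t) := by
          rw [dotProduct]
          exact Finset.sum_congr rfl fun i _ => by rw [hmv i]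
      _ = t ^ 2 * ∑ i, (W * Wᵀ) (Fin.last N) i * (W * Wᵀ) i (Fin.last N) := by
          rw [Finset.mul_sum]
          refine Finset.sum_congr rfl fun i _ => ?_
          have hsym : (W * Wᵀ) i (Fin.last N) = (W * Wᵀ) (Fin.last N) i := by
            simp only [Matrix.mul_apply, Matrix.transpose_apply]
            exact Finset.sum_congr rfl fun j _ => mul_comm _ _
          rw [hsym]; ring
      _ = t ^ 2 * ((W * Wᵀ) * (W * Wᵀ)) (Fin.last N) (Fin.last N) := by
          rw [Matrix.mul_apply]
      _ = t ^ 2 * s := by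
          rw [show (W * Wᵀ) * (W * Wᵀ) = W * Wᵀ by
            rw [Matrix.mul_assoc, ← Matrix.mul_assoc Wᵀ, hW, Matrix.one_mul], hsP]
  rw [hdet, hxx, hproj, hα]
  field_simp
  ring
end

section
/- Let h : M → N be a smooth surjective map of Riemannian manifolds, let ψ be a probability density on N, and for each y ∈ N let ρ_y be a probability density on the fiber h^{-1}(y). Let X be the random variable on M obtained by first sampling Y ∈ N with density ψ and then sampling X ∈ h^{-1}(Y) with density ρ_Y. Then X has density β(x) = ψ(h(x)) · ρ_{h(x)}(x) · NJ(h,x) with respect to the Riemannian volume measure on M. -/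
open MeasureTheory

/-- Corollary 3.5 (2), density of a fiberwise construction via the coarea
formula: let `h : M → N` be a smooth surjective map of Riemannian manifolds with volume
measures `μ`, `ν`, normal Jacobian `NJ` (finite and positive at regular points), and
fiber volume measures `fib y` on `h⁻¹(y)`, satisfying the coarea formula (`hcoarea`).
Let `ψ` be a probability density on `N` and, for each `y`, let `ρ y` be a probability
density on the fiber `h⁻¹(y)`.  The random variable `X` obtained by sampling `Y ∼ ψ`
and then `X ∈ h⁻¹(Y)` with density `ρ_Y` — whose law is the bound measure below — has
density `β(x) = ψ(h(x))·ρ_{h(x)}(x)·NJ(h,x)` on `M`. -/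
theorem density_of_fiberwise_sampling
    {M N : Type*} [MeasurableSpace M] [MeasurableSpace N]
    (μ : Measure M) (ν : Measure N) (h : M → N) (hmeas : Measurable h)
    (NJ : M → ENNReal) (hNJmeas : Measurable NJ)
    (hNJ : ∀ x, NJ x ≠ 0 ∧ NJ x ≠ ⊤)
    (fib : N → Measure M) (hfib : ∀ y, fib y {x | h x ≠ y} = 0)
    (hcoarea : ∀ a : M → ENNReal, Measurable a →
      ∫⁻ x, a x ∂μ = ∫⁻ y, (∫⁻ x, a x / NJ x ∂(fib y)) ∂ν)
    (ψ : N → ENNReal) (hψ : Measurable ψ)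
    (hψprob : IsProbabilityMeasure (ν.withDensity ψ))
    (ρ : N → M → ENNReal) (hρ : Measurable (Function.uncurry ρ))
    (hρprob : ∀ y, IsProbabilityMeasure ((fib y).withDensity (ρ y)))
    (hkernel : Measurable fun y => (fib y).withDensity (ρ y)) :
    (ν.withDensity ψ).bind (fun y => (fib y).withDensity (ρ y))
      = μ.withDensity (fun x => ψ (h x) * ρ (h x) x * NJ x) := by
  have hρ' : Measurable fun x : M => ρ (h x) x :=
    hρ.comp (hmeas.prodMk measurable_id)
  have hβ : Measurable fun x => ψ (h x) * ρ (h x) x * NJ x :=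
    ((hψ.comp hmeas).mul hρ').mul hNJmeas
  ext s hs
  rw [Measure.bind_apply hs hkernel.aemeasurable,
    lintegral_withDensity_eq_lintegral_mul ν hψ
      (g := fun y => ((fib y).withDensity (ρ y)) s) ((Measure.measurable_coe hs).comp hkernel),
    withDensity_apply _ hs, ← lintegral_indicator hs,
    hcoarea _ (hβ.indicator hs)]
  refine lintegral_congr_ae (Filter.Eventually.of_forall fun y => ?_)
  have hae : ∀ᵐ x ∂(fib y), h x = y := by
    rw [MeasureTheory.ae_iff]
    simpa using hfib y
  beta_reduce
  have hstep : ∫⁻ x, s.indicator (fun x => ψ (h x) * ρ (h x) x * NJ x) x / NJ x ∂(fib y)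
      = ∫⁻ x, s.indicator (fun x => ψ y * ρ y x) x ∂(fib y) := by
    refine lintegral_congr_ae (hae.mono fun x hx => ?_)
    by_cases hxs : x ∈ s
    · simp only [Set.indicator_of_mem hxs, hx, mul_div_assoc,
        ENNReal.div_self (hNJ x).1 (hNJ x).2, mul_one]
    · simp [Set.indicator_of_notMem hxs, ENNReal.zero_div]
  simp only [Pi.mul_apply]
  rw [hstep, lintegral_indicator hs]
  have hρy : Measurable (ρ y) := by
    have := hρ.comp (measurable_const.prodMk measurable_id : Measurable fun x : M => (y, x))
    exact this
  rw [withDensity_apply _ hs, ← lintegral_const_mul _ hρy]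
end

section
/- Let M ⊂ ℝ^N be an n-dimensional algebraic manifold contained in a variety of degree d, with sup_{x∈M} ‖x‖² = C < ∞ and sup_{x∈M} |f(x)| = K < ∞ for a measurable function f. Define α(x) = (√(1+⟨x, Π_{N_x M} x⟩)/(1+‖x‖²)^{(n+1)/2})·Γ((n+1)/2)/π^{(n+1)/2} and f̄(A,b) = Σ_{x ∈ M ∩ L_{A,b}} f(x)/α(x), where L_{A,b} = {x : Ax = b}. Then the variance of f̄ under the standard Gaussian distribution on (A,b) ∈ ℝ^{n×N}×ℝ^n satisfies σ²(f̄) ≤ d²(1+C)^{n+1} · π^{n+1}/Γ((n+1)/2)² · K². -/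
open MeasureTheory ProbabilityTheory RealInnerProductSpace

noncomputable section

variable (n N : ℕ)

/-- The standard Gaussian measure on `ℝ^{n×N} × ℝⁿ`: all entries of `(A,b)` i.i.d. `N(0,1)`. -/
def gaussianAb : Measure ((Fin n → Fin N → ℝ) × (Fin n → ℝ)) :=
  (Measure.pi fun _ : Fin n => Measure.pi fun _ : Fin N => gaussianReal 0 1).prod
    (Measure.pi fun _ : Fin n => gaussianReal 0 1)

/-- `A x` for `A ∈ ℝ^{n×N}` and `x ∈ ℝ^N`. -/
def matVec (A : Fin n → Fin N → ℝ) (x : EuclideanSpace ℝ (Fin N)) : Fin n → ℝ :=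
  fun i => ∑ j, A i j * x j

/-- The function `α(x) = √(1+⟨x, Π_{N_x M} x⟩)/(1+‖x‖²)^{(n+1)/2} · Γ((n+1)/2)/π^{(n+1)/2}`,
where the normal space `N_x M` is given by `Nsp x`. -/
def alphaFn (Nsp : EuclideanSpace ℝ (Fin N) → Submodule ℝ (EuclideanSpace ℝ (Fin N)))
    (x : EuclideanSpace ℝ (Fin N)) : ℝ :=
  Real.sqrt (1 + ⟪x, (Submodule.orthogonalProjectionOnto (Nsp x) x : EuclideanSpace ℝ (Fin N))⟫) /
      (1 + ‖x‖ ^ 2) ^ (((n : ℝ) + 1) / 2) *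
    (Real.Gamma (((n : ℝ) + 1) / 2) / Real.pi ^ (((n : ℝ) + 1) / 2))

/-- `f̄(A,b) = Σ_{x ∈ M ∩ L_{A,b}} f(x)/α(x)`. -/
def fbar (M : Set (EuclideanSpace ℝ (Fin N)))
    (Nsp : EuclideanSpace ℝ (Fin N) → Submodule ℝ (EuclideanSpace ℝ (Fin N)))
    (f : EuclideanSpace ℝ (Fin N) → ℝ)
    (Ab : (Fin n → Fin N → ℝ) × (Fin n → ℝ)) : ℝ :=
  ∑' x : {x : EuclideanSpace ℝ (Fin N) // x ∈ M ∧ matVec n N Ab.1 x = Ab.2},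
    f x.1 / alphaFn n N Nsp x.1

/-- Pointwise lower bound on `alphaFn`. -/
lemma alphaFn_ge (Nsp : EuclideanSpace ℝ (Fin N) → Submodule ℝ (EuclideanSpace ℝ (Fin N)))
    (C : ℝ) (hC0 : 0 ≤ C) (x : EuclideanSpace ℝ (Fin N)) (hx : ‖x‖ ^ 2 ≤ C) :
    Real.Gamma (((n : ℝ) + 1) / 2) / Real.pi ^ (((n : ℝ) + 1) / 2) / (1 + C) ^ (((n : ℝ) + 1) / 2)
      ≤ alphaFn n N Nsp x := by
  have hr : (0:ℝ) < ((n : ℝ) + 1) / 2 := by positivity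
  have hΓ : 0 < Real.Gamma (((n : ℝ) + 1) / 2) := Real.Gamma_pos_of_pos hr
  have hπ : 0 < Real.pi ^ (((n : ℝ) + 1) / 2) := Real.rpow_pos_of_pos Real.pi_pos _
  set P : EuclideanSpace ℝ (Fin N) :=
    (Submodule.orthogonalProjectionOnto (Nsp x) x : EuclideanSpace ℝ (Fin N)) with hP
  have hip : 0 ≤ ⟪x, P⟫ := by
    have h1 : x - P ∈ (Nsp x)ᗮ := Submodule.sub_starProjection_mem_orthogonal (K := Nsp x) x
    have h2 : ⟪P, x - P⟫ = 0 :=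
      (Submodule.mem_orthogonal _ _).1 h1 P (Submodule.orthogonalProjectionOnto (Nsp x) x).2
    rw [inner_sub_right, sub_eq_zero] at h2
    rw [real_inner_comm, h2]
    exact real_inner_self_nonneg
  have hs : (1:ℝ) ≤ Real.sqrt (1 + ⟪x, P⟫) := by
    have := Real.sqrt_le_sqrt (show (1:ℝ) ≤ 1 + ⟪x, P⟫ by linarith)
    rwa [Real.sqrt_one] at this
  have hden : (1 + ‖x‖ ^ 2) ^ (((n : ℝ) + 1) / 2) ≤ (1 + C) ^ (((n : ℝ) + 1) / 2) :=
    Real.rpow_le_rpow (by positivity) (by linarith) hr.le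
  have hdpos : (0:ℝ) < (1 + ‖x‖ ^ 2) ^ (((n : ℝ) + 1) / 2) :=
    Real.rpow_pos_of_pos (by positivity) _
  have hfrac : (1:ℝ) / (1 + C) ^ (((n : ℝ) + 1) / 2)
      ≤ Real.sqrt (1 + ⟪x, P⟫) / (1 + ‖x‖ ^ 2) ^ (((n : ℝ) + 1) / 2) :=
    div_le_div₀ (by positivity) hs hdpos hden
  unfold alphaFn
  rw [← hP]
  calc Real.Gamma (((n : ℝ) + 1) / 2) / Real.pi ^ (((n : ℝ) + 1) / 2)
        / (1 + C) ^ (((n : ℝ) + 1) / 2)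
      = (1 / (1 + C) ^ (((n : ℝ) + 1) / 2)) *
          (Real.Gamma (((n : ℝ) + 1) / 2) / Real.pi ^ (((n : ℝ) + 1) / 2)) := by ring
    _ ≤ Real.sqrt (1 + ⟪x, P⟫) / (1 + ‖x‖ ^ 2) ^ (((n : ℝ) + 1) / 2) *
          (Real.Gamma (((n : ℝ) + 1) / 2) / Real.pi ^ (((n : ℝ) + 1) / 2)) :=
        mul_le_mul_of_nonneg_right hfrac (by positivity)

/-- deterministic variance bound, inequality (5.1): if `M` is an
`n`-dimensional algebraic manifold contained in a variety of degree `d` (so that almost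
every affine-linear space `L_{A,b}` of codimension `n` meets `M` in at most `d` points),
`‖x‖² ≤ C` and `|f(x)| ≤ K` on `M`, then the variance of `f̄` under the standard Gaussian
distribution on `(A,b)` satisfies
`σ²(f̄) ≤ d²(1+C)^{n+1} · π^{n+1}/Γ((n+1)/2)² · K²`. -/
theorem variance_fbar_le (M : Set (EuclideanSpace ℝ (Fin N)))
    (Nsp : EuclideanSpace ℝ (Fin N) → Submodule ℝ (EuclideanSpace ℝ (Fin N)))
    (f : EuclideanSpace ℝ (Fin N) → ℝ)
    (d : ℕ) (C K : ℝ) (hC0 : 0 ≤ C) (hK0 : 0 ≤ K)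
    (hC : ∀ x ∈ M, ‖x‖ ^ 2 ≤ C) (hK : ∀ x ∈ M, |f x| ≤ K)
    (hmeas : AEStronglyMeasurable (fbar n N M Nsp f) (gaussianAb n N))
    (hdeg : ∀ᵐ Ab ∂(gaussianAb n N),
      {x ∈ M | matVec n N Ab.1 x = Ab.2}.Finite ∧
        {x ∈ M | matVec n N Ab.1 x = Ab.2}.ncard ≤ d) :
    variance (fbar n N M Nsp f) (gaussianAb n N)
      ≤ d ^ 2 * (1 + C) ^ (n + 1) *
          (Real.pi ^ (n + 1) / Real.Gamma (((n : ℝ) + 1) / 2) ^ 2) * K ^ 2 := by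
  classical
  have hprob : IsProbabilityMeasure (gaussianAb n N) := by
    rw [gaussianAb]; infer_instance
  have hr : (0:ℝ) < ((n : ℝ) + 1) / 2 := by positivity
  have hΓ : 0 < Real.Gamma (((n : ℝ) + 1) / 2) := Real.Gamma_pos_of_pos hr
  have hπ : 0 < Real.pi ^ (((n : ℝ) + 1) / 2) := Real.rpow_pos_of_pos Real.pi_pos _
  have h1C : (0:ℝ) < 1 + C := by linarith
  have hCp : 0 < (1 + C) ^ (((n : ℝ) + 1) / 2) := Real.rpow_pos_of_pos h1C _
  set α0 : ℝ := Real.Gamma (((n : ℝ) + 1) / 2) / Real.pi ^ (((n : ℝ) + 1) / 2)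
      / (1 + C) ^ (((n : ℝ) + 1) / 2) with hα0
  have hα0pos : 0 < α0 := by positivity
  set B : ℝ := (d : ℝ) * (K / α0) with hB
  have hBpos : 0 ≤ B := by positivity
  -- pointwise bound on terms
  have hterm : ∀ x ∈ M, |f x / alphaFn n N Nsp x| ≤ K / α0 := by
    intro x hx
    have hge : α0 ≤ alphaFn n N Nsp x := alphaFn_ge n N Nsp C hC0 x (hC x hx)
    have hαpos : 0 < alphaFn n N Nsp x := lt_of_lt_of_le hα0pos hge
    rw [abs_div, abs_of_pos hαpos]
    exact div_le_div₀ hK0 (hK x hx) hα0pos hge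
  -- a.e. bound on |fbar|
  have hbound : ∀ᵐ Ab ∂(gaussianAb n N), |fbar n N M Nsp f Ab| ≤ B := by
    filter_upwards [hdeg] with Ab hAb
    obtain ⟨hfin, hcard⟩ := hAb
    haveI hFt : Fintype {x : EuclideanSpace ℝ (Fin N) // x ∈ M ∧ matVec n N Ab.1 x = Ab.2} :=
      hfin.fintype
    have hcard' : (Fintype.card
        {x : EuclideanSpace ℝ (Fin N) // x ∈ M ∧ matVec n N Ab.1 x = Ab.2} : ℝ) ≤ (d : ℝ) := by
      have h1 : Fintype.card {x : EuclideanSpace ℝ (Fin N) // x ∈ M ∧ matVec n N Ab.1 x = Ab.2}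
          = {x ∈ M | matVec n N Ab.1 x = Ab.2}.ncard := by
        rw [← Nat.card_eq_fintype_card]
        exact Nat.card_coe_set_eq _
      rw [h1]
      exact_mod_cast hcard
    calc |fbar n N M Nsp f Ab|
        = |∑ x : {x : EuclideanSpace ℝ (Fin N) // x ∈ M ∧ matVec n N Ab.1 x = Ab.2},
            f x.1 / alphaFn n N Nsp x.1| := by rw [fbar, tsum_fintype]
      _ ≤ ∑ x : {x : EuclideanSpace ℝ (Fin N) // x ∈ M ∧ matVec n N Ab.1 x = Ab.2},
            |f x.1 / alphaFn n N Nsp x.1| := Finset.abs_sum_le_sum_abs _ _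
      _ ≤ ∑ _x : {x : EuclideanSpace ℝ (Fin N) // x ∈ M ∧ matVec n N Ab.1 x = Ab.2},
            (K / α0) := Finset.sum_le_sum fun x _ => hterm x.1 x.2.1
      _ = (Fintype.card {x : EuclideanSpace ℝ (Fin N) // x ∈ M ∧ matVec n N Ab.1 x = Ab.2} : ℝ)
            * (K / α0) := by rw [Finset.sum_const, Finset.card_univ, nsmul_eq_mul]
      _ ≤ B := by
          rw [hB]
          exact mul_le_mul_of_nonneg_right hcard' (by positivity)
  have hsq : ∀ᵐ Ab ∂(gaussianAb n N), ‖(fbar n N M Nsp f ^ 2) Ab‖ ≤ B ^ 2 := by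
    filter_upwards [hbound] with Ab h
    rw [Pi.pow_apply, Real.norm_eq_abs, abs_pow]
    exact pow_le_pow_left₀ (abs_nonneg _) h 2
  have hvar : variance (fbar n N M Nsp f) (gaussianAb n N) ≤ B ^ 2 := by
    refine le_trans (variance_le_expectation_sq hmeas) ?_
    calc ∫ Ab, (fbar n N M Nsp f ^ 2) Ab ∂(gaussianAb n N)
        ≤ ‖∫ Ab, (fbar n N M Nsp f ^ 2) Ab ∂(gaussianAb n N)‖ := le_abs_self _
      _ ≤ B ^ 2 * (gaussianAb n N Set.univ).toReal :=
          norm_integral_le_of_norm_le_const hsq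
      _ = B ^ 2 := by rw [measure_univ, ENNReal.toReal_one, mul_one]
  refine hvar.trans (le_of_eq ?_)
  have hπ2 : (Real.pi ^ (((n : ℝ) + 1) / 2)) ^ 2 = Real.pi ^ (n + 1) := by
    rw [← Real.rpow_natCast (Real.pi ^ (((n : ℝ) + 1) / 2)) 2,
      ← Real.rpow_mul Real.pi_pos.le, ← Real.rpow_natCast Real.pi (n + 1)]
    congr 1
    push_cast
    ring
  have hC2 : ((1 + C) ^ (((n : ℝ) + 1) / 2)) ^ 2 = (1 + C) ^ (n + 1) := by
    rw [← Real.rpow_natCast ((1 + C) ^ (((n : ℝ) + 1) / 2)) 2,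
      ← Real.rpow_mul h1C.le, ← Real.rpow_natCast (1 + C) (n + 1)]
    congr 1
    push_cast
    ring
  rw [hB, hα0]
  rw [mul_pow, div_pow, div_pow, div_pow, hπ2, hC2]
  field_simp

end
end
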